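/- arXiv:1805.06772 — 6 statements merged into one kernel-verified Lean document; each statement's English description precedes it below -/
import Mathlib

section
/- Let a < b and α, β, k be real numbers. Suppose x₀ : ℝ → ℝ is twice continuously differentiable on [a,b] with x₀(a) = α, x₀(b) = β and ∫_a^b x₀(t) dt = k, and suppose x₀ minimizes arc length among all such functions, i.e. for every x : ℝ → ℝ twice continuously differentiable on [a,b] with x(a) = α, x(b) = β and ∫_a^b x(t) dt = k one has ∫_a^b √(1 + x₀'(t)²) dt ≤ ∫_a^b √(1 + x'(t)²) dt. Then either x₀ agrees on [a,b] with an affine function t ↦ p·t + q, or there exist real numbers c₁, c₂ and r > 0 such that (t − c₁)² + (x₀(t) − c₂)² = r² for all t ∈ [a,b] (the graph of x₀ is a circular arc). -/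
/-!
Perturbing `x₀` by `ε η`, where `η` is a primitive of a function `χ` with `∫ χ = ∫ t χ = 0` (so that
`η` vanishes at both ends and has zero integral), the first variation of arc length shows that
`φ = x₀' / √(1 + x₀'²)` is orthogonal to every such `χ`. Testing against combinations of three
concentrating bumps whose masses and first moments cancel forces `φ` to be affine, `φ t = p t + q`.
If `p = 0` the slope of `x₀` is constant; otherwise `x₀' = φ / √(1 - φ²)` integrates to
`x₀ t = c₂ - √(1 - (p t + q)²) / p`, a circle of radius `1 / |p|` centred at `(-q / p, c₂)`.
-/

open Set Function MeasureTheory Filter Topology Metric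
open scoped ContDiff

/-- The derivative of the arc-length integrand `v ↦ √(1 + v ^ 2)`. -/
noncomputable def slopeSin (v : ℝ) : ℝ := v / √(1 + v ^ 2)

lemma abs_slopeSin_lt_one (v : ℝ) : |slopeSin v| < 1 := by
  have hs : 0 < √(1 + v ^ 2) := by positivity
  rw [slopeSin, abs_div, abs_of_pos hs, div_lt_one hs,
    Real.lt_sqrt (abs_nonneg v), sq_abs]
  linarith

lemma slopeSin_div_sqrt_one_sub_sq (v : ℝ) : slopeSin v / √(1 - slopeSin v ^ 2) = v := by
  have hs : 0 < √(1 + v ^ 2) := by positivity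
  have h : 1 - slopeSin v ^ 2 = (√(1 + v ^ 2))⁻¹ ^ 2 := by
    rw [slopeSin, div_pow, inv_pow, Real.sq_sqrt (by positivity)]
    field_simp
    ring
  rw [h, Real.sqrt_sq (inv_nonneg.mpr hs.le), slopeSin]
  field_simp

lemma continuous_slopeSin : Continuous slopeSin :=
  continuous_id.div (by fun_prop) fun v => by positivity

lemma sqrt_one_add_sq_add_le (u w : ℝ) :
    √(1 + (u + w) ^ 2) ≤ √(1 + u ^ 2) + slopeSin u * w + w ^ 2 / 2 := by
  rw [slopeSin]
  set s := √(1 + u ^ 2)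
  set r := √(1 + (u + w) ^ 2)
  have hs : 1 ≤ s := Real.one_le_sqrt.mpr (by nlinarith)
  have hs2 : s ^ 2 = 1 + u ^ 2 := Real.sq_sqrt (by positivity)
  have hr2 : r ^ 2 = 1 + (u + w) ^ 2 := Real.sq_sqrt (by positivity)
  -- `r s ≤ (r² + s²) / 2`, and `s ≥ 1` absorbs the remaining `w² / 2`
  have key : r * s ≤ s ^ 2 + u * w + w ^ 2 / 2 * s := by
    nlinarith [sq_nonneg (r - s), mul_le_mul_of_nonneg_left hs (sq_nonneg w)]
  rw [show s + u / s * w + w ^ 2 / 2 = (s ^ 2 + u * w + w ^ 2 / 2 * s) / s by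
    field_simp, le_div_iff₀ (by linarith)]
  exact key

lemma eq_zero_of_forall_mul_add_sq_mul_nonneg {G C : ℝ} (h : ∀ ε : ℝ, 0 ≤ ε * G + ε ^ 2 * C) :
    G = 0 := by
  have hmin : IsLocalMin (fun ε : ℝ => ε * G + ε ^ 2 * C) 0 :=
    Eventually.of_forall fun ε => by simpa using h ε
  have hderiv : HasDerivAt (fun ε : ℝ => ε * G + ε ^ 2 * C) G 0 := by
    simpa using ((hasDerivAt_id' (0 : ℝ)).mul_const G).fun_add
      ((hasDerivAt_pow 2 (0 : ℝ)).mul_const C)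
  exact hmin.hasDerivAt_eq_zero hderiv

lemma contDiff_primitive {χ : ℝ → ℝ} {n : ℕ} (hχ : ContDiff ℝ n χ) (a : ℝ) :
    ContDiff ℝ (n + 1) fun t => ∫ u in a..t, χ u := by
  have hderiv : ∀ t, HasDerivAt (fun t => ∫ u in a..t, χ u) (χ t) t := fun t =>
    (hχ.continuous.integral_hasStrictDerivAt a t).hasDerivAt
  refine contDiff_succ_iff_deriv.mpr ⟨fun t => (hderiv t).differentiableAt, by simp, ?_⟩
  rwa [funext fun t => (hderiv t).deriv]

lemma integral_primitive_eq_zero {a b : ℝ} {χ : ℝ → ℝ} (hχ : Continuous χ)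
    (h₀ : ∫ t in a..b, χ t = 0) (h₁ : ∫ t in a..b, t * χ t = 0) :
    ∫ t in a..b, (∫ u in a..t, χ u) = 0 := by
  have hparts := intervalIntegral.integral_mul_deriv_eq_deriv_mul (a := a) (b := b)
    (fun t _ => (hχ.integral_hasStrictDerivAt a t).hasDerivAt) (fun t _ => hasDerivAt_id t)
    (hχ.intervalIntegrable a b) intervalIntegrable_const
  simp only [mul_one, id, intervalIntegral.integral_same, h₀] at hparts
  simp_rw [mul_comm (χ _)] at hparts
  rw [hparts, h₁]
  ring

lemma integral_sqrt_one_add_sq_add_mul_le {a b : ℝ} (hab : a ≤ b) {d χ : ℝ → ℝ}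
    (hd : ContinuousOn d (Icc a b)) (hχ : ContinuousOn χ (Icc a b)) (ε : ℝ) :
    ∫ t in a..b, √(1 + (d t + ε * χ t) ^ 2) ≤
      (∫ t in a..b, √(1 + d t ^ 2)) + ε * (∫ t in a..b, slopeSin (d t) * χ t) +
        ε ^ 2 * ((∫ t in a..b, χ t ^ 2) / 2) := by
  have hL : ContinuousOn (fun t => √(1 + d t ^ 2)) (Icc a b) := by fun_prop
  have hG : ContinuousOn (fun t => slopeSin (d t) * χ t) (Icc a b) :=
    (continuous_slopeSin.comp_continuousOn hd).mul hχ
  have hC : ContinuousOn (fun t => χ t ^ 2) (Icc a b) := hχ.pow 2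
  calc ∫ t in a..b, √(1 + (d t + ε * χ t) ^ 2)
      ≤ ∫ t in a..b, (√(1 + d t ^ 2) + ε * (slopeSin (d t) * χ t) + ε ^ 2 * (χ t ^ 2 / 2)) := by
        refine intervalIntegral.integral_mono_on hab ?_ ?_ fun t _ => ?_
        · exact ContinuousOn.intervalIntegrable_of_Icc (μ := volume) hab (by fun_prop)
        · exact ((hL.add (hG.const_mul ε)).add
            ((hC.div_const 2).const_mul _)).intervalIntegrable_of_Icc hab
        · linarith [sqrt_one_add_sq_add_le (d t) (ε * χ t)]
    _ = _ := by
        have hL := hL.intervalIntegrable_of_Icc (μ := volume) hab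
        have hG := (hG.intervalIntegrable_of_Icc (μ := volume) hab).const_mul ε
        have hC := ((hC.intervalIntegrable_of_Icc (μ := volume) hab).div_const 2).const_mul (ε ^ 2)
        rw [intervalIntegral.integral_add (hL.add hG) hC, intervalIntegral.integral_add hL hG,
          intervalIntegral.integral_const_mul, intervalIntegral.integral_const_mul,
          intervalIntegral.integral_div]

lemma hasDerivAt_derivWithin_Icc {a b : ℝ} {x : ℝ → ℝ} (hx : DifferentiableOn ℝ x (Icc a b))
    {t : ℝ} (ht : t ∈ Ioo a b) :
    HasDerivAt x (derivWithin x (Icc a b) t) t := by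
  have hnhds : Icc a b ∈ 𝓝 t := Icc_mem_nhds ht.1 ht.2
  rw [derivWithin_of_mem_nhds hnhds]
  exact ((hx t (Ioo_subset_Icc_self ht)).differentiableAt hnhds).hasDerivAt

theorem integral_slopeSin_derivWithin_mul_eq_zero {a b : ℝ} (hab : a < b) {x₀ : ℝ → ℝ}
    (hx₀ : ContDiffOn ℝ 2 x₀ (Icc a b))
    (hmin : ∀ x : ℝ → ℝ, ContDiffOn ℝ 2 x (Icc a b) → x a = x₀ a → x b = x₀ b →
      (∫ t in a..b, x t) = ∫ t in a..b, x₀ t →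
      (∫ t in a..b, √(1 + deriv x₀ t ^ 2)) ≤ ∫ t in a..b, √(1 + deriv x t ^ 2))
    {χ : ℝ → ℝ} (hχ : ContDiff ℝ 1 χ) (h₀ : ∫ t in a..b, χ t = 0)
    (h₁ : ∫ t in a..b, t * χ t = 0) :
    ∫ t in a..b, slopeSin (derivWithin x₀ (Icc a b) t) * χ t = 0 := by
  set d := derivWithin x₀ (Icc a b)
  set η := fun t => ∫ u in a..t, χ u
  have hd : ContinuousOn d (Icc a b) :=
    hx₀.continuousOn_derivWithin (uniqueDiffOn_Icc hab) one_le_two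
  have hx₀' : ∀ t ∈ Ioo a b, HasDerivAt x₀ (d t) t := fun t ht =>
    hasDerivAt_derivWithin_Icc (hx₀.differentiableOn two_ne_zero) ht
  have hη : ContDiff ℝ 2 η := by
    simpa [one_add_one_eq_two] using contDiff_primitive (n := 1) (by simpa using hχ) a
  have hη' : ∀ t, HasDerivAt η (χ t) t := fun t =>
    (hχ.continuous.integral_hasStrictDerivAt a t).hasDerivAt
  have hL₀ : ∫ t in a..b, √(1 + deriv x₀ t ^ 2) = ∫ t in a..b, √(1 + d t ^ 2) :=
    intervalIntegral.integral_congr_Ioo_of_le hab.le fun t ht => by rw [(hx₀' t ht).deriv]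
  -- `x₀ + ε η` is an admissible competitor for every `ε`
  refine eq_zero_of_forall_mul_add_sq_mul_nonneg (C := (∫ t in a..b, χ t ^ 2) / 2) fun ε => ?_
  have hLε : ∫ t in a..b, √(1 + deriv (fun s => x₀ s + ε * η s) t ^ 2) =
      ∫ t in a..b, √(1 + (d t + ε * χ t) ^ 2) :=
    intervalIntegral.integral_congr_Ioo_of_le hab.le fun t ht => by
      rw [((hx₀' t ht).fun_add ((hη' t).const_mul ε)).deriv]
  have hcomp := hmin (fun s => x₀ s + ε * η s) (hx₀.add (contDiff_const.mul hη).contDiffOn)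
    (by simp [η]) (by simp [η, h₀]) (by
      rw [intervalIntegral.integral_add (hx₀.continuousOn.intervalIntegrable_of_Icc hab.le)
        ((contDiff_const.mul hη).continuous.intervalIntegrable a b),
        intervalIntegral.integral_const_mul, integral_primitive_eq_zero hχ.continuous h₀ h₁]
      ring)
  rw [hL₀, hLε] at hcomp
  linarith [integral_sqrt_one_add_sq_add_mul_le hab.le hd hχ.continuous.continuousOn ε]

namespace ContDiffBump

variable {s : ℝ} (B : ContDiffBump s)

lemma integrable_mul_normed {φ : ℝ → ℝ} (hφ : ContinuousOn φ (closedBall s B.rOut)) :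
    Integrable fun t => φ t * B.normed volume t := by
  refine (integrableOn_iff_integrable_of_support_subset fun t ht => ?_).mp
    ((hφ.mul B.continuous_normed.continuousOn).integrableOn_compact (isCompact_closedBall s _))
  rw [← B.tsupport_normed_eq (μ := volume)]
  exact subset_tsupport _ (support_mul_subset_right _ _ ht)

lemma abs_integral_mul_normed_sub_le {φ : ℝ → ℝ} (hφ : ContinuousOn φ (closedBall s B.rOut))
    {ε : ℝ} (hε : ∀ t ∈ ball s B.rOut, |φ t - φ s| ≤ ε) :
    |(∫ t, φ t * B.normed volume t) - φ s| ≤ ε := by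
  have hρ := B.integrable_normed (μ := volume)
  have hsub : (∫ t, φ t * B.normed volume t) - φ s = ∫ t, (φ t - φ s) * B.normed volume t := by
    simp_rw [sub_mul]
    rw [integral_sub (B.integrable_mul_normed hφ) (hρ.const_mul _), integral_const_mul,
      B.integral_normed, mul_one]
  rw [hsub]
  calc |∫ t, (φ t - φ s) * B.normed volume t| ≤ ∫ t, ε * B.normed volume t := by
        rw [← Real.norm_eq_abs]
        refine norm_integral_le_of_norm_le (hρ.const_mul ε) (Eventually.of_forall fun t => ?_)
        rw [Real.norm_eq_abs, abs_mul, abs_of_nonneg (B.nonneg_normed t)]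
        by_cases ht : t ∈ ball s B.rOut
        · exact mul_le_mul_of_nonneg_right (hε t ht) (B.nonneg_normed t)
        · rw [← B.support_normed_eq (μ := volume), notMem_support] at ht
          simp [ht]
    _ = ε := by rw [integral_const_mul, B.integral_normed, mul_one]

lemma integral_mul_normed_eq_center : ∫ t, t * B.normed volume t = s := by
  have hsymm : ∀ t, B.normed volume (2 * s - t) = B.normed volume t := fun t => by
    simpa [two_mul, sub_sub_eq_add_sub, add_sub_cancel] using B.normed_sub (μ := volume) (t - s)
  -- the reflection `t ↦ 2 s - t` preserves the bump and Lebesgue measure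
  have hrefl := integral_sub_left_eq_self (fun t => t * B.normed volume t) volume (2 * s)
  simp only [hsymm, sub_mul] at hrefl
  rw [integral_sub (B.integrable_normed.const_mul _)
      (B.integrable_mul_normed (φ := fun t => t) continuousOn_id),
    integral_const_mul, B.integral_normed] at hrefl
  linarith

lemma tendsto_integral_mul_normed {ι : Type*} {l : Filter ι} {B : ι → ContDiffBump s}
    (hB : Tendsto (fun i => (B i).rOut) l (𝓝 0)) {φ : ℝ → ℝ} {U : Set ℝ} (hU : U ∈ 𝓝 s)
    (hφ : ContinuousOn φ U) :
    Tendsto (fun i => ∫ t, φ t * (B i).normed volume t) l (𝓝 (φ s)) := by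
  rw [Metric.tendsto_nhds]
  intro ε hε
  obtain ⟨δ, hδ, hδφ⟩ := Metric.continuousAt_iff.mp (hφ.continuousAt hU) (ε / 2) (half_pos hε)
  filter_upwards [hB.eventually (eventually_closedBall_subset hU),
    hB.eventually (gt_mem_nhds hδ)] with i hiU hiδ
  rw [Real.dist_eq]
  refine (abs_integral_mul_normed_sub_le (B i) (hφ.mono hiU) fun t ht => ?_).trans_lt
    (half_lt_self hε)
  exact (hδφ ((mem_ball.mp ht).trans hiδ)).le

end ContDiffBump

noncomputable def shrinkingBump (s : ℝ) (n : ℕ) : ContDiffBump s where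
  rIn := 1 / (n + 2)
  rOut := 1 / (n + 1)
  rIn_pos := by positivity
  rIn_lt_rOut := one_div_lt_one_div_of_lt (by positivity) (by linarith)

lemma tendsto_shrinkingBump_rOut (s : ℝ) :
    Tendsto (fun n => (shrinkingBump s n).rOut) atTop (𝓝 0) :=
  tendsto_one_div_add_atTop_nhds_zero_nat

lemma integral_mul_sum_normed {ι : Type*} [Fintype ι] {s : ι → ℝ} (B : ∀ i, ContDiffBump (s i))
    (c : ι → ℝ) {f : ℝ → ℝ} (hf : ∀ i, ContinuousOn f (closedBall (s i) (B i).rOut)) :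
    ∫ t, f t * ∑ i, c i * (B i).normed volume t =
      ∑ i, c i * ∫ t, f t * (B i).normed volume t := by
  simp_rw [Finset.mul_sum, mul_left_comm (f _), ← integral_const_mul]
  exact integral_finsetSum _ fun i _ => ((B i).integrable_mul_normed (hf i)).const_mul (c i)

theorem sum_mul_eq_zero_of_forall_integral_mul_eq_zero {a b : ℝ} {φ : ℝ → ℝ}
    (hφ : ContinuousOn φ (Ioo a b))
    (h : ∀ χ : ℝ → ℝ, ContDiff ℝ ∞ χ → support χ ⊆ Ioo a b →
      ∫ t in a..b, χ t = 0 → ∫ t in a..b, t * χ t = 0 → ∫ t in a..b, φ t * χ t = 0)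
    {ι : Type*} [Fintype ι] (c s : ι → ℝ) (hs : ∀ i, s i ∈ Ioo a b) (hc₀ : ∑ i, c i = 0)
    (hc₁ : ∑ i, c i * s i = 0) :
    ∑ i, c i * φ (s i) = 0 := by
  set B : ℕ → ∀ i, ContDiffBump (s i) := fun n i => shrinkingBump (s i) n
  set χ : ℕ → ℝ → ℝ := fun n t => ∑ i, c i * (B n i).normed volume t
  have hlim : Tendsto (fun n => ∑ i, c i * ∫ t, φ t * (B n i).normed volume t) atTop
      (𝓝 (∑ i, c i * φ (s i))) :=
    tendsto_finsetSum _ fun i _ => (ContDiffBump.tendsto_integral_mul_normed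
      (tendsto_shrinkingBump_rOut (s i)) (isOpen_Ioo.mem_nhds (hs i)) hφ).const_mul (c i)
  have hballs : ∀ᶠ n in atTop, ∀ i, closedBall (s i) (B n i).rOut ⊆ Ioo a b :=
    eventually_all.mpr fun i => (tendsto_shrinkingBump_rOut (s i)).eventually
      (eventually_closedBall_subset (isOpen_Ioo.mem_nhds (hs i)))
  refine tendsto_nhds_unique hlim (tendsto_const_nhds.congr' ?_)
  filter_upwards [hballs] with n hn
  have hsupp : support (χ n) ⊆ Ioo a b := support_subset_iff'.mpr fun t ht =>
    Finset.sum_eq_zero fun i _ => by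
      rw [notMem_support.mp fun h' =>
        ht (hn i (ball_subset_closedBall ((B n i).support_normed_eq (μ := volume) ▸ h'))), mul_zero]
  have hint : ∀ f : ℝ → ℝ, ContinuousOn f (Ioo a b) →
      ∫ t in a..b, f t * χ n t = ∑ i, c i * ∫ t, f t * (B n i).normed volume t := by
    intro f hf
    rw [intervalIntegral.integral_eq_integral_of_support_subset
      ((support_mul_subset_right _ _).trans (hsupp.trans Ioo_subset_Ioc_self))]
    exact integral_mul_sum_normed _ c fun i => hf.mono (hn i)
  rw [← hint φ hφ]
  refine (h (χ n) (ContDiff.sum fun i _ => contDiff_const.mul (B n i).contDiff_normed) hsupp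
    ?_ ?_).symm
  · have hmass := hint (fun _ => 1) continuousOn_const
    simp only [one_mul, ContDiffBump.integral_normed, mul_one] at hmass
    rw [hmass, hc₀]
  · rw [hint (fun t => t) continuousOn_id]
    simpa only [ContDiffBump.integral_mul_normed_eq_center] using hc₁

theorem exists_affine_of_forall_integral_mul_eq_zero {a b : ℝ} (hab : a < b) {φ : ℝ → ℝ}
    (hφ : ContinuousOn φ (Ioo a b))
    (h : ∀ χ : ℝ → ℝ, ContDiff ℝ ∞ χ → support χ ⊆ Ioo a b →
      ∫ t in a..b, χ t = 0 → ∫ t in a..b, t * χ t = 0 → ∫ t in a..b, φ t * χ t = 0) :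
    ∃ p q : ℝ, ∀ t ∈ Ioo a b, φ t = p * t + q := by
  obtain ⟨u, hu, v, hv, huv⟩ : ∃ u ∈ Ioo a b, ∃ v ∈ Ioo a b, u < v :=
    ⟨(2 * a + b) / 3, ⟨by linarith, by linarith⟩, (a + 2 * b) / 3, ⟨by linarith, by linarith⟩,
      by linarith⟩
  refine ⟨(φ v - φ u) / (v - u), (v * φ u - u * φ v) / (v - u), fun t ht => ?_⟩
  have hcol := sum_mul_eq_zero_of_forall_integral_mul_eq_zero hφ h ![v - u, t - v, u - t]
    ![t, u, v] (fun i => by fin_cases i <;> assumption) (by simp [Fin.sum_univ_three])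
    (by simp [Fin.sum_univ_three]; ring)
  simp only [Fin.sum_univ_three, Matrix.cons_val] at hcol
  field_simp [(sub_pos.mpr huv).ne']
  linear_combination hcol

lemma eqOn_Icc_of_hasDerivAt_derivWithin {a b : ℝ} {f g : ℝ → ℝ}
    (hf : DifferentiableOn ℝ f (Icc a b))
    (hg : ∀ t ∈ Icc a b, HasDerivAt g (derivWithin f (Icc a b) t) t) (ha : f a = g a) :
    ∀ t ∈ Icc a b, f t = g t :=
  eq_of_derivWithin_eq hf (fun t ht => (hg t ht).differentiableAt.differentiableWithinAt)
    (fun t ht => ((hg t (Ico_subset_Icc_self ht)).hasDerivWithinAt.derivWithin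
      (uniqueDiffOn_Icc (ht.1.trans_lt ht.2) t (Ico_subset_Icc_self ht))).symm) ha

lemma exists_eq_affine_of_slopeSin_derivWithin_eq_const {a b q : ℝ} {x : ℝ → ℝ}
    (hx : DifferentiableOn ℝ x (Icc a b))
    (h : ∀ t ∈ Icc a b, slopeSin (derivWithin x (Icc a b) t) = q) :
    ∃ p c : ℝ, ∀ t ∈ Icc a b, x t = p * t + c := by
  set p := q / √(1 - q ^ 2)
  refine ⟨p, x a - p * a, eqOn_Icc_of_hasDerivAt_derivWithin hx (fun t ht => ?_) (by ring)⟩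
  rw [← slopeSin_div_sqrt_one_sub_sq (derivWithin x (Icc a b) t), h t ht]
  simpa using ((hasDerivAt_id t).const_mul p).add_const (x a - p * a)

lemma exists_circle_of_slopeSin_derivWithin_eq_affine {a b p q : ℝ} (hp : p ≠ 0) {x : ℝ → ℝ}
    (hx : DifferentiableOn ℝ x (Icc a b))
    (h : ∀ t ∈ Icc a b, slopeSin (derivWithin x (Icc a b) t) = p * t + q) :
    ∃ c₁ c₂ r : ℝ, 0 < r ∧ ∀ t ∈ Icc a b, (t - c₁) ^ 2 + (x t - c₂) ^ 2 = r ^ 2 := by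
  set w : ℝ → ℝ := fun t => √(1 - (p * t + q) ^ 2)
  have hpos : ∀ t ∈ Icc a b, 0 < 1 - (p * t + q) ^ 2 := fun t ht => by
    have hlt := abs_slopeSin_lt_one (derivWithin x (Icc a b) t)
    rw [h t ht] at hlt
    exact sub_pos.mpr ((sq_lt_one_iff_abs_lt_one _).mpr hlt)
  set c₂ := x a + w a / p
  have hx_eq : ∀ t ∈ Icc a b, x t = c₂ - w t / p := by
    refine eqOn_Icc_of_hasDerivAt_derivWithin hx (fun t ht => ?_) (by simp [c₂])
    rw [← slopeSin_div_sqrt_one_sub_sq (derivWithin x (Icc a b) t), h t ht]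
    have hlin : HasDerivAt (fun s => p * s + q) p t := by
      simpa using ((hasDerivAt_id t).const_mul p).add_const q
    have hw := ((hlin.fun_pow 2).const_sub 1).sqrt (hpos t ht).ne'
    refine ((hw.div_const p).const_sub c₂).congr_deriv ?_
    field_simp
    ring
  refine ⟨-q / p, c₂, 1 / |p|, by positivity, fun t ht => ?_⟩
  have hw : w t ^ 2 = 1 - (p * t + q) ^ 2 := Real.sq_sqrt (hpos t ht).le
  rw [hx_eq t ht, div_pow, one_pow, sq_abs]
  field_simp
  linear_combination hw

/-- **Lemma 2.4.** If `x₀` is C² on `[a,b]`, has prescribed endpoint values and prescribed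
integral `k`, and minimizes arc length `∫ √(1 + x'²)` among all such functions, then the
graph of `x₀` is a straight line segment or a circular arc. -/
theorem stmt_2 (a b α β k : ℝ) (hab : a < b) (x₀ : ℝ → ℝ)
    (hx₀ : ContDiffOn ℝ 2 x₀ (Set.Icc a b)) (hx₀a : x₀ a = α) (hx₀b : x₀ b = β)
    (hx₀k : ∫ t in a..b, x₀ t = k)
    (hmin : ∀ x : ℝ → ℝ, ContDiffOn ℝ 2 x (Set.Icc a b) → x a = α → x b = β →
      (∫ t in a..b, x t) = k →
      (∫ t in a..b, Real.sqrt (1 + (deriv x₀ t) ^ 2)) ≤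
        ∫ t in a..b, Real.sqrt (1 + (deriv x t) ^ 2)) :
    (∃ p q : ℝ, ∀ t ∈ Set.Icc a b, x₀ t = p * t + q) ∨
    (∃ c₁ c₂ r : ℝ, 0 < r ∧ ∀ t ∈ Set.Icc a b, (t - c₁) ^ 2 + (x₀ t - c₂) ^ 2 = r ^ 2) := by
  subst hx₀a hx₀b hx₀k
  set φ := fun t => slopeSin (derivWithin x₀ (Icc a b) t)
  have hφ : ContinuousOn φ (Icc a b) := continuous_slopeSin.comp_continuousOn
    (hx₀.continuousOn_derivWithin (uniqueDiffOn_Icc hab) one_le_two)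
  obtain ⟨p, q, hpq⟩ := exists_affine_of_forall_integral_mul_eq_zero hab
    (hφ.mono Ioo_subset_Icc_self) fun χ hχ _ h₀ h₁ =>
      integral_slopeSin_derivWithin_mul_eq_zero hab hx₀ hmin (hχ.of_le (by simp)) h₀ h₁
  have hpq' : ∀ t ∈ Icc a b, φ t = p * t + q :=
    EqOn.of_subset_closure hpq hφ (by fun_prop) Ioo_subset_Icc_self (closure_Ioo hab.ne).ge
  have hx₀' := hx₀.differentiableOn two_ne_zero
  rcases eq_or_ne p 0 with rfl | hp
  · exact .inl (exists_eq_affine_of_slopeSin_derivWithin_eq_const hx₀' (by simpa using hpq'))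
  · exact .inr (exists_circle_of_slopeSin_derivWithin_eq_affine hp hx₀' hpq')
end

section
/- Let A > 0 and let a, b, r be positive real numbers with √(a² + b² − ab) ≤ 2r, satisfying the area constraint r²·arcsin(√(a² + b² − ab)/(2r)) − (1/4)·√(a² + b² − ab)·√(4r² − a² − b² + ab) + (√3/4)·a·b = A. Then 2r·arcsin(√(a² + b² − ab)/(2r)) ≥ √((2/3)·A·π). -/
open Real Set

noncomputable def Garc (θ : ℝ) : ℝ :=
  (6 / π) * θ ^ 2 - θ + Real.sin (2 * θ + π / 3) - Real.sqrt 3 / 2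

noncomputable def Garc' (θ : ℝ) : ℝ :=
  (12 / π) * θ - 1 + 2 * Real.cos (2 * θ + π / 3)

noncomputable def Garc'' (θ : ℝ) : ℝ :=
  12 / π - 4 * Real.sin (2 * θ + π / 3)

lemma hasDerivAt_lin (θ : ℝ) : HasDerivAt (fun x : ℝ => 2 * x + π / 3) 2 θ := by
  simpa using (hasDerivAt_id' (x := θ)).const_mul (2:ℝ) |>.add_const (π / 3)

lemma hasDerivAt_Garc (θ : ℝ) : HasDerivAt Garc (Garc' θ) θ := by
  have h1 : HasDerivAt (fun x : ℝ => Real.sin (2 * x + π / 3))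
      (Real.cos (2 * θ + π / 3) * 2) θ := (hasDerivAt_lin θ).sin
  have h2 : HasDerivAt (fun x : ℝ => (6 / π) * x ^ 2) ((6 / π) * (2 * θ)) θ := by
    have := (hasDerivAt_pow 2 θ).const_mul ((6:ℝ) / π)
    norm_num at this
    exact this
  have H := ((h2.sub (hasDerivAt_id' (x := θ))).add h1).sub_const (Real.sqrt 3 / 2)
  have hv : Garc' θ = (6 / π) * (2 * θ) - 1 + Real.cos (2 * θ + π / 3) * 2 := by
    rw [Garc']; ring
  rw [show Garc = (fun x : ℝ =>
      (6 / π) * x ^ 2 - x + Real.sin (2 * x + π / 3) - Real.sqrt 3 / 2) from rfl, hv]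
  exact H

lemma hasDerivAt_Garc' (θ : ℝ) : HasDerivAt Garc' (Garc'' θ) θ := by
  have h1 : HasDerivAt (fun x : ℝ => Real.cos (2 * x + π / 3))
      (-Real.sin (2 * θ + π / 3) * 2) θ := (hasDerivAt_lin θ).cos
  have h2 : HasDerivAt (fun x : ℝ => (12 / π) * x) (12 / π) θ := by
    simpa using (hasDerivAt_id' (x := θ)).const_mul ((12:ℝ) / π)
  have H := (h2.sub_const 1).add (h1.const_mul 2)
  have hv : Garc'' θ = 12 / π + 2 * (-Real.sin (2 * θ + π / 3) * 2) := by
    rw [Garc'']; ring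
  rw [show Garc' = (fun x : ℝ =>
      (12 / π) * x - 1 + 2 * Real.cos (2 * x + π / 3)) from rfl, hv]
  exact H

lemma hasDerivAt_Garc'' (θ : ℝ) :
    HasDerivAt Garc'' (-8 * Real.cos (2 * θ + π / 3)) θ := by
  have h1 : HasDerivAt (fun x : ℝ => Real.sin (2 * x + π / 3))
      (Real.cos (2 * θ + π / 3) * 2) θ := (hasDerivAt_lin θ).sin
  have H := (hasDerivAt_const θ ((12:ℝ) / π)).sub (h1.const_mul 4)
  have hv : -8 * Real.cos (2 * θ + π / 3) = 0 - 4 * (Real.cos (2 * θ + π / 3) * 2) := by ring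
  rw [show Garc'' = (fun x : ℝ =>
      12 / π - 4 * Real.sin (2 * x + π / 3)) from rfl, hv]
  exact H

lemma Garc'_zero : Garc' 0 = 0 := by
  simp [Garc', Real.cos_pi_div_three]

lemma Garc'_pi12 : Garc' (π / 12) = 0 := by
  have h : 2 * (π / 12) + π / 3 = π / 2 := by ring
  have h2 : (12 / π) * (π / 12) = 1 := by
    field_simp
  rw [Garc', h, Real.cos_pi_div_two, h2]
  ring

lemma Garc'_pi6 : Garc' (π / 6) = 0 := by
  have h : 2 * (π / 6) + π / 3 = π - π / 3 := by ring
  have h2 : (12 / π) * (π / 6) = 2 := by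
    field_simp
    ring
  rw [Garc', h, Real.cos_pi_sub, Real.cos_pi_div_three, h2]
  ring

lemma Garc_zero : Garc 0 = 0 := by
  simp [Garc, Real.sin_pi_div_three]

lemma Garc_pi6 : Garc (π / 6) = 0 := by
  have h : 2 * (π / 6) + π / 3 = π - π / 3 := by ring
  have h2 : (6 / π) * (π / 6) ^ 2 = π / 6 := by
    field_simp
  rw [Garc, h, Real.sin_pi_sub, Real.sin_pi_div_three, h2]
  ring

/-- `Garc'` is nonneg on `[0, π/12]` (it is concave there with zero endpoints). -/
lemma Garc'_nonneg_left : ∀ θ ∈ Icc (0:ℝ) (π / 12), 0 ≤ Garc' θ := by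
  have hπ := Real.pi_pos
  have hcc : ConcaveOn ℝ (Icc (0:ℝ) (π / 12)) Garc' := by
    apply concaveOn_of_hasDerivWithinAt2_nonpos (f' := Garc'')
      (f'' := fun x => -8 * Real.cos (2 * x + π / 3))
      (convex_Icc _ _)
      (fun x _ => (hasDerivAt_Garc' x).continuousAt.continuousWithinAt)
      (fun x _ => (hasDerivAt_Garc' x).hasDerivWithinAt)
      (fun x _ => (hasDerivAt_Garc'' x).hasDerivWithinAt)
    intro x hx
    rw [interior_Icc] at hx
    have h1 : 0 ≤ Real.cos (2 * x + π / 3) := by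
      apply Real.cos_nonneg_of_mem_Icc
      constructor
      · linarith [hx.1]
      · linarith [hx.2]
    nlinarith
  intro θ hθ
  have hseg : θ ∈ segment ℝ (0:ℝ) (π / 12) := by
    rw [segment_eq_Icc (by linarith : (0:ℝ) ≤ π / 12)]; exact hθ
  have := hcc.ge_on_segment (left_mem_Icc.2 (by linarith)) (right_mem_Icc.2 (by linarith)) hseg
  rw [Garc'_zero, Garc'_pi12] at this
  simpa using this

/-- `Garc'` is nonpos on `[π/12, π/6]` (it is convex there with zero endpoints). -/
lemma Garc'_nonpos_mid : ∀ θ ∈ Icc (π / 12) (π / 6), Garc' θ ≤ 0 := by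
  have hπ := Real.pi_pos
  have hcv : ConvexOn ℝ (Icc (π / 12) (π / 6)) Garc' := by
    apply convexOn_of_hasDerivWithinAt2_nonneg (f' := Garc'')
      (f'' := fun x => -8 * Real.cos (2 * x + π / 3))
      (convex_Icc _ _)
      (fun x _ => (hasDerivAt_Garc' x).continuousAt.continuousWithinAt)
      (fun x _ => (hasDerivAt_Garc' x).hasDerivWithinAt)
      (fun x _ => (hasDerivAt_Garc'' x).hasDerivWithinAt)
    intro x hx
    rw [interior_Icc] at hx
    have h1 : Real.cos (2 * x + π / 3) ≤ 0 := by
      apply Real.cos_nonpos_of_pi_div_two_le_of_le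
      · linarith [hx.1]
      · linarith [hx.2]
    nlinarith
  intro θ hθ
  have hseg : θ ∈ segment ℝ (π / 12) (π / 6) := by
    rw [segment_eq_Icc (by linarith : π / 12 ≤ π / 6)]; exact hθ
  have := hcv.le_on_segment (left_mem_Icc.2 (by linarith)) (right_mem_Icc.2 (by linarith)) hseg
  rw [Garc'_pi12, Garc'_pi6] at this
  simpa using this

lemma sqrt3_pi_lt : Real.sqrt 3 * π < 6 := by
  have h1 : π < 3.15 := Real.pi_lt_d2
  have h2 : Real.sqrt 3 < 1.74 := by
    have h3 : (Real.sqrt 3) ^ 2 = 3 := Real.sq_sqrt (by norm_num)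
    nlinarith [Real.sqrt_nonneg 3]
  nlinarith [Real.pi_pos, Real.sqrt_nonneg 3]

/-- `Garc''` is nonneg on `[π/6, π/2]`. -/
lemma Garc''_nonneg_right : ∀ θ ∈ Icc (π / 6) (π / 2), 0 ≤ Garc'' θ := by
  have hπ := Real.pi_pos
  intro θ hθ
  have hsin : Real.sin (2 * θ + π / 3) ≤ Real.sqrt 3 / 2 := by
    have h1 : Real.sin (2 * θ + π / 3) = Real.cos ((2 * θ + π / 3) - π / 2) := by
      rw [← Real.cos_pi_div_two_sub, ← Real.cos_neg]; ring_nf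
    rw [h1, ← Real.cos_pi_div_six]
    apply Real.cos_le_cos_of_nonneg_of_le_pi
    · linarith [hθ.1]
    · linarith [hθ.2]
    · linarith [hθ.1]
  have h3 : 2 * Real.sqrt 3 ≤ 12 / π := by
    rw [le_div_iff₀ hπ]
    nlinarith [sqrt3_pi_lt]
  rw [Garc'']
  linarith

/-- The key inequality: `Garc θ ≥ 0` on `[0, π/2]`. -/
lemma Garc_nonneg : ∀ θ ∈ Icc (0:ℝ) (π / 2), 0 ≤ Garc θ := by
  have hπ := Real.pi_pos
  intro θ hθ
  rcases le_or_gt θ (π / 12) with h1 | h1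
  · have hmono : MonotoneOn Garc (Icc (0:ℝ) (π / 12)) := by
      apply monotoneOn_of_hasDerivWithinAt_nonneg (f' := Garc') (convex_Icc _ _)
        (fun x _ => (hasDerivAt_Garc x).continuousAt.continuousWithinAt)
        (fun x _ => (hasDerivAt_Garc x).hasDerivWithinAt)
      intro x hx
      rw [interior_Icc] at hx
      exact Garc'_nonneg_left x ⟨hx.1.le, hx.2.le⟩
    have := hmono (left_mem_Icc.2 (by linarith)) ⟨hθ.1, h1⟩ hθ.1
    rw [Garc_zero] at this
    exact this
  rcases le_or_gt θ (π / 6) with h2 | h2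
  · have hmono : AntitoneOn Garc (Icc (π / 12) (π / 6)) := by
      apply antitoneOn_of_hasDerivWithinAt_nonpos (f' := Garc') (convex_Icc _ _)
        (fun x _ => (hasDerivAt_Garc x).continuousAt.continuousWithinAt)
        (fun x _ => (hasDerivAt_Garc x).hasDerivWithinAt)
      intro x hx
      rw [interior_Icc] at hx
      exact Garc'_nonpos_mid x ⟨hx.1.le, hx.2.le⟩
    have := hmono ⟨h1.le, h2⟩ (right_mem_Icc.2 (by linarith)) h2
    rw [Garc_pi6] at this
    exact this
  · have hmono' : MonotoneOn Garc' (Icc (π / 6) (π / 2)) := by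
      apply monotoneOn_of_hasDerivWithinAt_nonneg (f' := Garc'') (convex_Icc _ _)
        (fun x _ => (hasDerivAt_Garc' x).continuousAt.continuousWithinAt)
        (fun x _ => (hasDerivAt_Garc' x).hasDerivWithinAt)
      intro x hx
      rw [interior_Icc] at hx
      exact Garc''_nonneg_right x ⟨hx.1.le, hx.2.le⟩
    have hG' : ∀ x ∈ Icc (π / 6) (π / 2), 0 ≤ Garc' x := by
      intro x hx
      have := hmono' (left_mem_Icc.2 (by linarith)) hx hx.1
      rw [Garc'_pi6] at this
      exact this
    have hmono : MonotoneOn Garc (Icc (π / 6) (π / 2)) := by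
      apply monotoneOn_of_hasDerivWithinAt_nonneg (f' := Garc') (convex_Icc _ _)
        (fun x _ => (hasDerivAt_Garc x).continuousAt.continuousWithinAt)
        (fun x _ => (hasDerivAt_Garc x).hasDerivWithinAt)
      intro x hx
      rw [interior_Icc] at hx
      exact hG' x ⟨hx.1.le, hx.2.le⟩
    have := hmono (left_mem_Icc.2 (by linarith)) ⟨h2.le, hθ.2⟩ h2.le
    rw [Garc_pi6] at this
    exact this

set_option maxHeartbeats 1000000 in
/-- **Lemma 2.5** (inequality part). A region of area `A` inside an angle `π/3` at vertex `O`,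
bounded by segments `OE`, `OF` of lengths `a`, `b` and a circular arc of radius `r` through
`E` and `F`, has arc length `2r·arcsin(√(a² + b² − ab)/(2r))` at least `√((2/3)·A·π)`. -/
theorem stmt_3 (A a b r : ℝ) (hA : 0 < A) (ha : 0 < a) (hb : 0 < b) (hr : 0 < r)
    (hchord : Real.sqrt (a ^ 2 + b ^ 2 - a * b) ≤ 2 * r)
    (harea : r ^ 2 * Real.arcsin (Real.sqrt (a ^ 2 + b ^ 2 - a * b) / (2 * r))
      - (1 / 4) * Real.sqrt (a ^ 2 + b ^ 2 - a * b)
          * Real.sqrt (4 * r ^ 2 - a ^ 2 - b ^ 2 + a * b)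
      + (Real.sqrt 3 / 4) * a * b = A) :
    2 * r * Real.arcsin (Real.sqrt (a ^ 2 + b ^ 2 - a * b) / (2 * r)) ≥
      Real.sqrt ((2 / 3) * A * Real.pi) := by
  have hπ := Real.pi_pos
  have hq : 0 < a ^ 2 + b ^ 2 - a * b := by nlinarith [sq_nonneg (a - b)]
  set c := Real.sqrt (a ^ 2 + b ^ 2 - a * b) with hc_def
  have hc_pos : 0 < c := Real.sqrt_pos.2 hq
  have hc2 : c ^ 2 = a ^ 2 + b ^ 2 - a * b := Real.sq_sqrt hq.le
  set x := c / (2 * r) with hx_def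
  have hx_pos : 0 < x := div_pos hc_pos (by linarith)
  have hx1 : x ≤ 1 := by
    rw [hx_def, div_le_one (by linarith : (0:ℝ) < 2 * r)]
    exact hchord
  set θ := Real.arcsin x with hθ_def
  have hθ0 : 0 ≤ θ := Real.arcsin_nonneg.2 hx_pos.le
  have hθπ : θ ≤ π / 2 := Real.arcsin_le_pi_div_two x
  have hsin : Real.sin θ = x := Real.sin_arcsin (by linarith) hx1
  have hcos : Real.cos θ = Real.sqrt (1 - x ^ 2) := Real.cos_arcsin x
  have hcos0 : 0 ≤ Real.cos θ := hcos ▸ Real.sqrt_nonneg _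
  have hr2 : ((2:ℝ) * r) ^ 2 ≠ 0 := by positivity
  have hx2 : 1 - x ^ 2 = (4 * r ^ 2 - c ^ 2) / (2 * r) ^ 2 := by
    rw [hx_def]
    field_simp
    ring
  have e1 : (2 * r) ^ 2 * ((4 * r ^ 2 - c ^ 2) / (2 * r) ^ 2) = 4 * r ^ 2 - c ^ 2 :=
    mul_div_cancel₀ _ hr2
  have hsqrt2 : Real.sqrt (4 * r ^ 2 - a ^ 2 - b ^ 2 + a * b) = 2 * r * Real.cos θ := by
    have h1 : 4 * r ^ 2 - a ^ 2 - b ^ 2 + a * b = (2 * r) ^ 2 * (1 - x ^ 2) := by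
      rw [hx2, e1, hc2]; ring
    rw [h1, Real.sqrt_mul (sq_nonneg _), Real.sqrt_sq (by linarith : (0:ℝ) ≤ 2 * r), hcos]
  have hc_eq : c = 2 * r * Real.sin θ := by
    rw [hsin, hx_def]
    field_simp
  -- area identity
  have hA_eq : A = r ^ 2 * θ - r ^ 2 * Real.sin θ * Real.cos θ + (Real.sqrt 3 / 4) * (a * b) := by
    rw [← harea, hsqrt2, hc_eq]
    ring
  -- ab ≤ c² = 4r² sin²θ
  have hab : a * b ≤ 4 * r ^ 2 * Real.sin θ ^ 2 := by
    have h1 : a * b ≤ c ^ 2 := by rw [hc2]; nlinarith [sq_nonneg (a - b)]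
    have h2 : c ^ 2 = 4 * r ^ 2 * Real.sin θ ^ 2 := by rw [hc_eq]; ring
    linarith [h2 ▸ h1]
  have hs3 : (0:ℝ) ≤ Real.sqrt 3 := Real.sqrt_nonneg 3
  have hA_le : A ≤ r ^ 2 * (θ - Real.sin θ * Real.cos θ + Real.sqrt 3 * Real.sin θ ^ 2) := by
    rw [hA_eq]
    nlinarith
  have hG := Garc_nonneg θ ⟨hθ0, hθπ⟩
  have hpy := Real.sin_sq_add_cos_sq θ
  have hGexp : Garc θ = (6 / π) * θ ^ 2 - (θ - Real.sin θ * Real.cos θ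
      + Real.sqrt 3 * Real.sin θ ^ 2) := by
    rw [Garc]
    have h1 : Real.sin (2 * θ + π / 3)
        = Real.sin (2 * θ) * (1 / 2) + Real.cos (2 * θ) * (Real.sqrt 3 / 2) := by
      rw [Real.sin_add, Real.cos_pi_div_three, Real.sin_pi_div_three]
    rw [h1, Real.sin_two_mul, Real.cos_two_mul']
    linear_combination (Real.sqrt 3 / 2) * hpy
  have hkey : θ - Real.sin θ * Real.cos θ + Real.sqrt 3 * Real.sin θ ^ 2 ≤ (6 / π) * θ ^ 2 := by
    rw [hGexp] at hG; linarith
  have hA2 : A ≤ (6 / π) * (r ^ 2 * θ ^ 2) := by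
    have h2 := mul_le_mul_of_nonneg_left hkey (sq_nonneg r)
    calc A ≤ r ^ 2 * (θ - Real.sin θ * Real.cos θ + Real.sqrt 3 * Real.sin θ ^ 2) := hA_le
      _ ≤ r ^ 2 * ((6 / π) * θ ^ 2) := h2
      _ = (6 / π) * (r ^ 2 * θ ^ 2) := by ring
  have hfin : (2 / 3) * A * π ≤ (2 * r * θ) ^ 2 := by
    have h1 : (2 / 3) * ((6 / π) * (r ^ 2 * θ ^ 2)) * π = (2 * r * θ) ^ 2 := by
      field_simp
      ring
    calc (2 / 3) * A * π ≤ (2 / 3) * ((6 / π) * (r ^ 2 * θ ^ 2)) * π := by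
          have h2 : (0:ℝ) < 2/3 := by norm_num
          nlinarith
      _ = (2 * r * θ) ^ 2 := h1
  calc Real.sqrt ((2 / 3) * A * π) ≤ Real.sqrt ((2 * r * θ) ^ 2) := Real.sqrt_le_sqrt hfin
    _ = 2 * r * θ := Real.sqrt_sq (by positivity)
end

section
/- Let A > 0 and let a, b, r be positive real numbers with √(a² + b² − ab) ≤ 2r, satisfying the area constraint r²·arcsin(√(a² + b² − ab)/(2r)) − (1/4)·√(a² + b² − ab)·√(4r² − a² − b² + ab) + (√3/4)·a·b = A. Then equality 2r·arcsin(√(a² + b² − ab)/(2r)) = √((2/3)·A·π) holds if and only if a = b = r = √(6A/π). -/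
open Real

/-! ### Auxiliary lemmas: Taylor-type bounds for sin and cos -/

lemma SL4aux_nonneg_of_deriv (F f : ℝ → ℝ) (h0 : F 0 = 0)
    (hd : ∀ x, HasDerivAt F (f x) x) (hf : ∀ x, 0 ≤ x → 0 ≤ f x) :
    ∀ x, 0 ≤ x → 0 ≤ F x := by
  intro x hx
  have hmono : MonotoneOn F (Set.Ici (0:ℝ)) := by
    apply monotoneOn_of_deriv_nonneg (convex_Ici 0)
    · exact fun y _ => (hd y).continuousAt.continuousWithinAt
    · intro y _
      exact (hd y).differentiableAt.differentiableWithinAt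
    · intro y hy
      rw [(hd y).deriv]
      exact hf y (le_of_lt (by simpa using hy))
  have := hmono (Set.self_mem_Ici) (Set.mem_Ici.mpr hx) hx
  linarith [h0 ▸ this]

lemma SL4aux_sin_le (x : ℝ) (hx : 0 ≤ x) : Real.sin x ≤ x := by
  rcases eq_or_lt_of_le hx with h | h
  · simp [← h]
  · exact (Real.sin_lt h).le

lemma SL4aux_cos_ge2 (x : ℝ) : 1 - x^2/2 ≤ Real.cos x := Real.one_sub_sq_div_two_le_cos

lemma SL4aux_sin_ge3 (x : ℝ) (hx : 0 ≤ x) : x - x^3/6 ≤ Real.sin x := by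
  have key := SL4aux_nonneg_of_deriv (fun x => Real.sin x - x + x^3/6)
    (fun x => Real.cos x - 1 + x^2/2) (by norm_num)
    (fun y => by
      have h : HasDerivAt (fun x => Real.sin x - x + x^3/6)
          (Real.cos y - 1 + (3:ℕ) * y^2 / 6) y :=
        ((Real.hasDerivAt_sin y).sub (hasDerivAt_id y)).add ((hasDerivAt_pow 3 y).div_const 6)
      convert h using 1; push_cast; ring)
    (fun y _ => by linarith [SL4aux_cos_ge2 y])
  linarith [key x hx]

lemma SL4aux_cos_le4 (x : ℝ) (hx : 0 ≤ x) : Real.cos x ≤ 1 - x^2/2 + x^4/24 := by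
  have key := SL4aux_nonneg_of_deriv (fun x => 1 - x^2/2 + x^4/24 - Real.cos x)
    (fun x => -(x - x^3/6) + Real.sin x) (by norm_num)
    (fun y => by
      have h : HasDerivAt (fun x => 1 - x^2/2 + x^4/24 - Real.cos x)
          (0 - (2:ℕ)*y^1/2 + (4:ℕ)*y^3/24 - (-Real.sin y)) y :=
        (((hasDerivAt_const y (1:ℝ)).sub ((hasDerivAt_pow 2 y).div_const 2)).add
          ((hasDerivAt_pow 4 y).div_const 24)).sub (Real.hasDerivAt_cos y)
      convert h using 1; push_cast; ring)
    (fun y hy => by linarith [SL4aux_sin_ge3 y hy])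
  linarith [key x hx]

lemma SL4aux_sin_le5 (x : ℝ) (hx : 0 ≤ x) : Real.sin x ≤ x - x^3/6 + x^5/120 := by
  have key := SL4aux_nonneg_of_deriv (fun x => x - x^3/6 + x^5/120 - Real.sin x)
    (fun x => 1 - x^2/2 + x^4/24 - Real.cos x) (by norm_num)
    (fun y => by
      have h : HasDerivAt (fun x => x - x^3/6 + x^5/120 - Real.sin x)
          (1 - (3:ℕ)*y^2/6 + (5:ℕ)*y^4/120 - Real.cos y) y :=
        (((hasDerivAt_id y).sub ((hasDerivAt_pow 3 y).div_const 6)).add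
          ((hasDerivAt_pow 5 y).div_const 120)).sub (Real.hasDerivAt_sin y)
      convert h using 1; push_cast; ring)
    (fun y hy => by linarith [SL4aux_cos_le4 y hy])
  linarith [key x hx]

lemma SL4aux_cos_ge6 (x : ℝ) (hx : 0 ≤ x) : 1 - x^2/2 + x^4/24 - x^6/720 ≤ Real.cos x := by
  have key := SL4aux_nonneg_of_deriv (fun x => Real.cos x - (1 - x^2/2 + x^4/24 - x^6/720))
    (fun x => (x - x^3/6 + x^5/120) - Real.sin x) (by norm_num)
    (fun y => by
      have h : HasDerivAt (fun x => Real.cos x - (1 - x^2/2 + x^4/24 - x^6/720))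
          (-Real.sin y - (0 - (2:ℕ)*y^1/2 + (4:ℕ)*y^3/24 - (6:ℕ)*y^5/720)) y :=
        (Real.hasDerivAt_cos y).sub ((((hasDerivAt_const y (1:ℝ)).sub
          ((hasDerivAt_pow 2 y).div_const 2)).add ((hasDerivAt_pow 4 y).div_const 24)).sub
          ((hasDerivAt_pow 6 y).div_const 720))
      convert h using 1; push_cast; ring)
    (fun y hy => by linarith [SL4aux_sin_le5 y hy])
  linarith [key x hx]

lemma SL4aux_sin_ge7 (x : ℝ) (hx : 0 ≤ x) : x - x^3/6 + x^5/120 - x^7/5040 ≤ Real.sin x := by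
  have key := SL4aux_nonneg_of_deriv (fun x => Real.sin x - (x - x^3/6 + x^5/120 - x^7/5040))
    (fun x => Real.cos x - (1 - x^2/2 + x^4/24 - x^6/720)) (by norm_num)
    (fun y => by
      have h : HasDerivAt (fun x => Real.sin x - (x - x^3/6 + x^5/120 - x^7/5040))
          (Real.cos y - (1 - (3:ℕ)*y^2/6 + (5:ℕ)*y^4/120 - (7:ℕ)*y^6/5040)) y :=
        (Real.hasDerivAt_sin y).sub ((((hasDerivAt_id y).sub
          ((hasDerivAt_pow 3 y).div_const 6)).add ((hasDerivAt_pow 5 y).div_const 120)).sub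
          ((hasDerivAt_pow 7 y).div_const 5040))
      convert h using 1; push_cast; ring)
    (fun y hy => by linarith [SL4aux_cos_ge6 y hy])
  linarith [key x hx]

/-! ### Numeric bounds -/

lemma SL4aux_sqrt3_lb : (1.7320508:ℝ) < Real.sqrt 3 := by
  have := Real.sq_sqrt (by norm_num : (0:ℝ) ≤ 3)
  nlinarith [Real.sqrt_nonneg 3]

lemma SL4aux_sqrt3_ub : Real.sqrt 3 < 1.7320509 := by
  have := Real.sq_sqrt (by norm_num : (0:ℝ) ≤ 3)
  nlinarith [Real.sqrt_nonneg 3]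

lemma SL4aux_v_lb : (5.44139:ℝ) < Real.sqrt 3 * π := by
  nlinarith [SL4aux_sqrt3_lb, Real.pi_gt_d6, Real.sqrt_nonneg 3, Real.pi_pos]

lemma SL4aux_v_ub : Real.sqrt 3 * π < 5.44140 := by
  nlinarith [SL4aux_sqrt3_ub, Real.pi_lt_d6, Real.sqrt_nonneg 3, Real.pi_pos, SL4aux_sqrt3_lb]

/-! ### The main one-variable function `G` and its study -/

noncomputable def SL4Gfun (y : ℝ) : ℝ :=
  3*y^2 - π*(y - Real.sin y) - Real.sqrt 3 * π * (1 - Real.cos y)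

noncomputable def SL4Gfun' (y : ℝ) : ℝ :=
  6*y - π*(1 - Real.cos y) - Real.sqrt 3 * π * Real.sin y

lemma SL4_hasDerivG (y : ℝ) : HasDerivAt SL4Gfun (SL4Gfun' y) y := by
  unfold SL4Gfun SL4Gfun'
  have h : HasDerivAt (fun y => 3*y^2 - π*(y - Real.sin y) - Real.sqrt 3 * π * (1 - Real.cos y))
      (3*((2:ℕ)*y^1) - π*(1 - Real.cos y) - Real.sqrt 3 * π * (0 - (-Real.sin y))) y :=
    (((hasDerivAt_pow 2 y).const_mul 3).sub
      (((hasDerivAt_id y).sub (Real.hasDerivAt_sin y)).const_mul π)).sub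
      (((hasDerivAt_const y (1:ℝ)).sub (Real.hasDerivAt_cos y)).const_mul (Real.sqrt 3 * π))
  convert h using 1; push_cast; ring

lemma SL4_hasDerivG' (y : ℝ) :
    HasDerivAt SL4Gfun' (6 - π*Real.sin y - Real.sqrt 3 * π * Real.cos y) y := by
  unfold SL4Gfun'
  have h : HasDerivAt (fun y => 6*y - π*(1 - Real.cos y) - Real.sqrt 3 * π * Real.sin y)
      (6*1 - π*(0 - (-Real.sin y)) - Real.sqrt 3 * π * Real.cos y) y :=
    (((hasDerivAt_id y).const_mul 6).sub
      (((hasDerivAt_const y (1:ℝ)).sub (Real.hasDerivAt_cos y)).const_mul π)).sub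
      ((Real.hasDerivAt_sin y).const_mul (Real.sqrt 3 * π))
  convert h using 1; ring

lemma SL4_polyQ (x u v : ℝ) (hx : 0 < x) (hx' : x ≤ 17/20)
    (hu1 : 3.141592 < u) (hu2 : u < 3.141593) (hv1 : 5.44139 < v) (hv2 : v < 5.44140) :
    0 < (3 - v/2) - (u/6)*x + (v/24)*x^2 + (u/120)*x^3 - (v/720)*x^4 - (u/5040)*x^5 := by
  have h85 : (0:ℝ) ≤ 17/20 - x := by linarith
  have h4 : x^4 ≤ (17/20)*x^3 := by nlinarith [pow_pos hx 3]
  have h5 : x^5 ≤ (17/20)^2*x^3 := by nlinarith [pow_pos hx 3, pow_pos hx 4]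
  nlinarith [mul_nonneg h85 (sq_nonneg (x - 17/20)), mul_nonneg h85 (sq_nonneg x),
    mul_nonneg h85 (mul_nonneg h85 hx.le), sq_nonneg (x - 17/20), mul_nonneg hx.le h85,
    pow_pos hx 3, pow_pos hx 2]

lemma SL4_partA (x : ℝ) (hx : 0 < x) (hx' : x ≤ 17/20) : 0 < SL4Gfun x := by
  unfold SL4Gfun
  have hs := SL4aux_sin_ge7 x hx.le
  have hc := SL4aux_cos_ge6 x hx.le
  have hQ := SL4_polyQ x π (Real.sqrt 3 * π) hx hx' Real.pi_gt_d6 Real.pi_lt_d6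
    SL4aux_v_lb SL4aux_v_ub
  have hx2 : 0 < x^2 := pow_pos hx 2
  have key := mul_pos hx2 hQ
  have h1 : 0 ≤ π * (Real.sin x - (x - x^3/6 + x^5/120 - x^7/5040)) :=
    mul_nonneg Real.pi_pos.le (by linarith)
  have h2 : 0 ≤ Real.sqrt 3 * π * (Real.cos x - (1 - x^2/2 + x^4/24 - x^6/720)) :=
    mul_nonneg (by positivity) (by linarith)
  nlinarith [key, h1, h2]

lemma SL4_G2pos {y : ℝ} (hy : y ∈ Set.Ioo (17/20:ℝ) π) :
    0 < 6 - π*Real.sin y - Real.sqrt 3 * π * Real.cos y := by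
  have hcomb : Real.sin y + Real.sqrt 3 * Real.cos y = 2 * Real.cos (y - π/6) := by
    rw [Real.cos_sub, Real.cos_pi_div_six, Real.sin_pi_div_six]; ring
  have hπ1 : (3.141592:ℝ) < π := Real.pi_gt_d6
  have hπ2 : π < 3.141593 := Real.pi_lt_d6
  have h1 : (163/500:ℝ) ≤ y - π/6 := by
    have := hy.1; linarith
  have h2 : y - π/6 ≤ π := by have := hy.2; linarith [Real.pi_pos]
  have hcos : Real.cos (y - π/6) ≤ Real.cos (163/500) :=
    Real.cos_le_cos_of_nonneg_of_le_pi (by norm_num) h2 h1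
  have hnum : Real.cos (163/500:ℝ) ≤ 0.9473328 := by
    have := SL4aux_cos_le4 (163/500) (by norm_num); norm_num at this ⊢; linarith
  nlinarith [Real.pi_pos]

lemma SL4_G1_pi3 : SL4Gfun' (π/3) = 0 := by
  unfold SL4Gfun'
  rw [Real.cos_pi_div_three, Real.sin_pi_div_three]
  have h3 : Real.sqrt 3 * Real.sqrt 3 = 3 := Real.mul_self_sqrt (by norm_num)
  linear_combination (-(π/2)) * h3

lemma SL4_G_pi3 : SL4Gfun (π/3) = 0 := by
  unfold SL4Gfun
  rw [Real.cos_pi_div_three, Real.sin_pi_div_three]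
  ring

lemma SL4_partB {y : ℝ} (hy : y ∈ Set.Icc (17/20:ℝ) π) :
    0 ≤ SL4Gfun y ∧ (SL4Gfun y = 0 → y = π/3) := by
  have hπ1 : (3.141592:ℝ) < π := Real.pi_gt_d6
  have hmem3 : π/3 ∈ Set.Icc (17/20:ℝ) π := by
    constructor <;> [linarith; linarith [Real.pi_pos]]
  have hmono1 : StrictMonoOn SL4Gfun' (Set.Icc (17/20:ℝ) π) := by
    apply strictMonoOn_of_deriv_pos (convex_Icc _ _)
    · exact fun z _ => (SL4_hasDerivG' z).continuousAt.continuousWithinAt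
    · intro z hz
      rw [interior_Icc] at hz
      rw [(SL4_hasDerivG' z).deriv]
      exact SL4_G2pos hz
  have hanti : StrictAntiOn SL4Gfun (Set.Icc (17/20:ℝ) (π/3)) := by
    apply strictAntiOn_of_deriv_neg (convex_Icc _ _)
    · exact fun z _ => (SL4_hasDerivG z).continuousAt.continuousWithinAt
    · intro z hz
      rw [interior_Icc] at hz
      rw [(SL4_hasDerivG z).deriv]
      have := hmono1 ⟨hz.1.le, by linarith [hz.2, Real.pi_pos]⟩ hmem3 hz.2
      rw [SL4_G1_pi3] at this; exact this
  have hmonoR : StrictMonoOn SL4Gfun (Set.Icc (π/3) π) := by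
    apply strictMonoOn_of_deriv_pos (convex_Icc _ _)
    · exact fun z _ => (SL4_hasDerivG z).continuousAt.continuousWithinAt
    · intro z hz
      rw [interior_Icc] at hz
      rw [(SL4_hasDerivG z).deriv]
      have := hmono1 hmem3 ⟨by linarith [hz.1], hz.2.le⟩ hz.1
      rw [SL4_G1_pi3] at this; exact this
  rcases lt_trichotomy y (π/3) with h | h | h
  · have := hanti ⟨hy.1, h.le⟩ ⟨by linarith, le_refl _⟩ h
    rw [SL4_G_pi3] at this
    exact ⟨this.le, fun h0 => absurd h0 (by linarith)⟩
  · exact ⟨by rw [h, SL4_G_pi3], fun _ => h⟩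
  · have := hmonoR ⟨le_refl _, by linarith [Real.pi_pos]⟩ ⟨h.le, hy.2⟩ h
    rw [SL4_G_pi3] at this
    exact ⟨this.le, fun h0 => absurd h0 (by linarith)⟩

lemma SL4_keyG (φ : ℝ) (h1 : 0 < φ) (h2 : φ ≤ π) :
    0 ≤ SL4Gfun φ ∧ (SL4Gfun φ = 0 → φ = π/3) := by
  rcases le_or_gt φ (17/20) with h | h
  · have := SL4_partA φ h1 h
    exact ⟨this.le, fun h0 => absurd h0 (by linarith)⟩
  · exact SL4_partB ⟨h.le, h2⟩

set_option maxHeartbeats 1000000 in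
/-- **Lemma 2.5** (equality case). With the notation of the sector lemma, the arc length
`2r·arcsin(√(a² + b² − ab)/(2r))` equals `√((2/3)·A·π)` if and only if
`a = b = r = √(6A/π)`. -/
theorem stmt_4 (A a b r : ℝ) (hA : 0 < A) (ha : 0 < a) (hb : 0 < b) (hr : 0 < r)
    (hchord : Real.sqrt (a ^ 2 + b ^ 2 - a * b) ≤ 2 * r)
    (harea : r ^ 2 * Real.arcsin (Real.sqrt (a ^ 2 + b ^ 2 - a * b) / (2 * r))
      - (1 / 4) * Real.sqrt (a ^ 2 + b ^ 2 - a * b)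
          * Real.sqrt (4 * r ^ 2 - a ^ 2 - b ^ 2 + a * b)
      + (Real.sqrt 3 / 4) * a * b = A) :
    2 * r * Real.arcsin (Real.sqrt (a ^ 2 + b ^ 2 - a * b) / (2 * r)) =
      Real.sqrt ((2 / 3) * A * Real.pi) ↔
    a = Real.sqrt (6 * A / Real.pi) ∧ b = Real.sqrt (6 * A / Real.pi) ∧
      r = Real.sqrt (6 * A / Real.pi) := by
  constructor
  · -- forward direction
    intro h
    set c := Real.sqrt (a ^ 2 + b ^ 2 - a * b) with hc_def
    have hab : 0 < a ^ 2 + b ^ 2 - a * b := by nlinarith [sq_nonneg (a - b)]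
    have hc2 : c ^ 2 = a ^ 2 + b ^ 2 - a * b := Real.sq_sqrt hab.le
    have hcpos : 0 < c := Real.sqrt_pos.mpr hab
    have hdiv1 : c / (2 * r) ≤ 1 := by
      rw [div_le_one (by linarith)]; exact hchord
    have hdivpos : 0 < c / (2 * r) := div_pos hcpos (by linarith)
    set θ := Real.arcsin (c / (2 * r)) with hθ_def
    have hsin : Real.sin θ = c / (2 * r) := Real.sin_arcsin (by linarith) hdiv1
    have hθpos : 0 < θ := Real.arcsin_pos.mpr hdivpos
    have hθle : θ ≤ π / 2 := Real.arcsin_le_pi_div_two _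
    have hcosnn : 0 ≤ Real.cos θ := Real.cos_nonneg_of_mem_Icc ⟨by linarith, hθle⟩
    clear_value c θ
    have hsincos : Real.sin θ ^ 2 + Real.cos θ ^ 2 = 1 := Real.sin_sq_add_cos_sq θ
    have hc_eq : c = 2 * r * Real.sin θ := by
      rw [hsin]; field_simp
    have hcc : c ^ 2 = 4 * r ^ 2 * Real.sin θ ^ 2 := by rw [hc_eq]; ring
    have hsq : 4 * r ^ 2 - a ^ 2 - b ^ 2 + a * b = (2 * r * Real.cos θ) ^ 2 := by
      linear_combination hc2 - hcc - (4 * r ^ 2) * hsincos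
    rw [hsq, Real.sqrt_sq (by positivity)] at harea
    have hsq' : 4 * r ^ 2 * θ ^ 2 = 2 / 3 * A * π := by
      have h2 : (2 * r * θ) ^ 2 = 2 / 3 * A * π := by
        rw [h]; exact Real.sq_sqrt (by positivity)
      linear_combination h2
    have hab4 : a * b ≤ 4 * r ^ 2 * Real.sin θ ^ 2 := by
      nlinarith [sq_nonneg (a - b), hc2, hcc]
    have hA_le : A ≤ r ^ 2 * θ - r ^ 2 * (Real.sin θ * Real.cos θ)
        + Real.sqrt 3 * r ^ 2 * Real.sin θ ^ 2 := by
      have h1 : Real.sqrt 3 / 4 * (a * b) ≤ Real.sqrt 3 / 4 * (4 * r ^ 2 * Real.sin θ ^ 2) :=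
        mul_le_mul_of_nonneg_left hab4 (by positivity)
      have h2 : 1 / 4 * c * (2 * r * Real.cos θ) = r ^ 2 * (Real.sin θ * Real.cos θ) := by
        rw [hc_eq]; ring
      linarith only [h1, h2, harea]
    have h6 : 6 * θ ^ 2 ≤ π * θ - π * (Real.sin θ * Real.cos θ)
        + Real.sqrt 3 * π * Real.sin θ ^ 2 := by
      have hmul : 2 / 3 * π * A ≤ 2 / 3 * π * (r ^ 2 * θ - r ^ 2 * (Real.sin θ * Real.cos θ)
          + Real.sqrt 3 * r ^ 2 * Real.sin θ ^ 2) :=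
        mul_le_mul_of_nonneg_left hA_le (by positivity)
      have h3 : r ^ 2 * (6 * θ ^ 2) ≤ r ^ 2 * (π * θ - π * (Real.sin θ * Real.cos θ)
          + Real.sqrt 3 * π * Real.sin θ ^ 2) := by linarith only [hmul, hsq']
      exact le_of_mul_le_mul_left h3 (pow_pos hr 2)
    have hGle : SL4Gfun (2 * θ) ≤ 0 := by
      unfold SL4Gfun
      rw [Real.sin_two_mul, Real.cos_two_mul]
      have hsc : Real.sqrt 3 * π * (Real.sin θ ^ 2 + Real.cos θ ^ 2) = Real.sqrt 3 * π := by
        rw [hsincos, mul_one]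
      nlinarith [h6, hsc]
    have hkey := SL4_keyG (2 * θ) (by linarith only [hθpos]) (by linarith only [hθle])
    have hG0 : SL4Gfun (2 * θ) = 0 := le_antisymm hGle hkey.1
    have hθval : θ = π / 6 := by
      have := hkey.2 hG0; linarith only [this]
    have hcr : c = r := by
      have h1 : c = 2 * r * (1/2) := by
        rw [hc_eq, hθval, Real.sin_pi_div_six]
      linarith only [h1]
    have hApir : π * A = π * (π * r ^ 2 / 6) := by
      have h2 : 4 * r ^ 2 * (π / 6) ^ 2 = 2 / 3 * A * π := by rw [← hθval]; exact hsq'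
      linear_combination (-(3/2)) * h2
    have hA' : A = π * r ^ 2 / 6 := mul_left_cancel₀ Real.pi_ne_zero hApir
    have habr : a * b = r ^ 2 := by
      rw [hθval, Real.cos_pi_div_six, hcr] at harea
      have h4 : Real.sqrt 3 / 4 * (a * b) - Real.sqrt 3 / 4 * r ^ 2 = 0 := by
        linear_combination harea + hA'
      have h3 : (0:ℝ) < Real.sqrt 3 := by nlinarith only [SL4aux_sqrt3_lb]
      nlinarith only [h4, h3]
    have haeqb : a = b := by
      have hz : (a - b) ^ 2 = 0 := by
        have hcc2 : r ^ 2 = a ^ 2 + b ^ 2 - a * b := by rw [← hcr]; exact hc2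
        nlinarith only [hcc2, habr]
      nlinarith only [hz]
    have har : a = r := by
      have h1 : a ^ 2 = r ^ 2 := by
        rw [haeqb] at habr ⊢
        nlinarith only [habr]
      nlinarith only [h1, ha, hr]
    have hrval : r = Real.sqrt (6 * A / π) := by
      have h1 : 6 * A / π = r ^ 2 := by
        rw [hA']; field_simp
      rw [h1, Real.sqrt_sq hr.le]
    exact ⟨by rw [har, hrval], by rw [← haeqb, har, hrval], hrval⟩
  · -- backward direction
    rintro ⟨ha', hb', hr'⟩
    have hAπpos : 0 < 6 * A / π := by positivity
    set s := Real.sqrt (6 * A / π) with hs_def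
    have hspos : 0 < s := Real.sqrt_pos.mpr hAπpos
    have hs2 : s ^ 2 = 6 * A / π := Real.sq_sqrt hAπpos.le
    have hs2' : s ^ 2 * π = 6 * A := by
      rw [hs2]; field_simp
    clear_value s
    rw [ha', hb', hr']
    have hcs : Real.sqrt (s ^ 2 + s ^ 2 - s * s) = s := by
      rw [show s ^ 2 + s ^ 2 - s * s = s ^ 2 by ring, Real.sqrt_sq hspos.le]
    rw [hcs]
    have hhalf : s / (2 * s) = 1 / 2 := by
      rw [div_eq_iff (by positivity : (2*s:ℝ) ≠ 0)]; ring
    rw [hhalf]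
    have harc : Real.arcsin (1 / 2) = π / 6 := by
      rw [← Real.sin_pi_div_six]
      exact Real.arcsin_sin (by linarith [Real.pi_pos]) (by linarith [Real.pi_pos])
    rw [harc]
    have hRHS : 2 / 3 * A * π = (s * (π / 6) * 2) ^ 2 := by
      have h9 : (s * (π / 6) * 2) ^ 2 = s ^ 2 * π * π / 9 := by ring
      rw [h9, hs2']; ring
    rw [hRHS, Real.sqrt_sq (by positivity)]
    ring
end

section
/- Let A > 0 and let d, r be real numbers with 0 < d ≤ r satisfying r²·arcsin(d/r) − d·√(r² − d²) = A. Then 2r·arcsin(d/r) ≥ √(2·A·π). -/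
/-!
Write `θ = 2 arcsin (d / r)` for the central angle. Then `d = r sin (θ / 2)` and
`√(r² - d²) = r cos (θ / 2)`, so the area is `A = r² (θ - sin θ) / 2` and the arc length is
`L = r θ`. The claim `L² ≥ 2πA` becomes `π (θ - sin θ) ≤ θ²`, i.e. the parabola bound
`θ (π - θ) ≤ π sin θ` on `[0, π]`. By the symmetry `θ ↦ π - θ` it suffices to prove it on
`[0, π / 2]`, using `sin θ ≥ θ - θ³ / 6` for small `θ` and Jordan's inequality
`sin θ ≥ 2θ / π` for `θ ≥ π - 2`.
-/

open Real

lemma mul_pi_sub_le_pi_mul_sin_of_le_pi_div_two {x : ℝ} (hx₀ : 0 ≤ x) (hx : x ≤ π / 2) :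
    x * (π - x) ≤ π * sin x := by
  rcases le_or_gt x (π - 2) with hsmall | hlarge
  · have hcube := sin_ge_sub_cube hx₀
    -- `π x ≤ π (π - 2) < 6`, which makes the cubic term small enough
    have hπx : π * x ≤ 6 := by nlinarith [pi_lt_d2, pi_gt_three]
    linarith [mul_le_mul_of_nonneg_left hcube pi_pos.le,
      mul_le_mul_of_nonneg_left hπx (sq_nonneg x)]
  · have hjordan : 2 * x ≤ π * sin x := by
      have := mul_le_mul_of_nonneg_left (mul_le_sin hx₀ hx) pi_pos.le
      rwa [← mul_assoc, mul_div_cancel₀ _ pi_ne_zero] at this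
    nlinarith

lemma mul_pi_sub_le_pi_mul_sin {x : ℝ} (hx₀ : 0 ≤ x) (hx : x ≤ π) :
    x * (π - x) ≤ π * sin x := by
  rcases le_or_gt x (π / 2) with hle | hgt
  · exact mul_pi_sub_le_pi_mul_sin_of_le_pi_div_two hx₀ hle
  · have := mul_pi_sub_le_pi_mul_sin_of_le_pi_div_two (x := π - x) (by linarith) (by linarith)
    rw [sin_pi_sub] at this
    linarith

lemma pi_mul_sq_mul_sub_sin_le_sq (r : ℝ) {θ : ℝ} (hθ₀ : 0 ≤ θ) (hθ : θ ≤ π) :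
    π * r ^ 2 * (θ - sin θ) ≤ (r * θ) ^ 2 := by
  have := mul_le_mul_of_nonneg_left (mul_pi_sub_le_pi_mul_sin hθ₀ hθ) (sq_nonneg r)
  linarith

lemma mul_sin_arcsin_div {d r : ℝ} (hr : 0 < r) (hd : -r ≤ d) (hdr : d ≤ r) :
    r * sin (arcsin (d / r)) = d := by
  rw [sin_arcsin ((le_div_iff₀ hr).2 (by linarith)) ((div_le_one hr).2 hdr)]
  field_simp

lemma sqrt_sq_sub_sq_eq_mul_cos_arcsin (d : ℝ) {r : ℝ} (hr : 0 < r) :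
    √(r ^ 2 - d ^ 2) = r * cos (arcsin (d / r)) := by
  rw [cos_arcsin, ← sqrt_sq hr.le, ← sqrt_mul (sq_nonneg r), sqrt_sq hr.le]
  congr 1
  field_simp

lemma sq_mul_arcsin_sub_mul_sqrt_eq {d r : ℝ} (hr : 0 < r) (hd : -r ≤ d) (hdr : d ≤ r) :
    r ^ 2 * arcsin (d / r) - d * √(r ^ 2 - d ^ 2) =
      r ^ 2 / 2 * (2 * arcsin (d / r) - sin (2 * arcsin (d / r))) := by
  calc r ^ 2 * arcsin (d / r) - d * √(r ^ 2 - d ^ 2)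
      _ = r ^ 2 * arcsin (d / r) - r * sin (arcsin (d / r)) * (r * cos (arcsin (d / r))) := by
        rw [mul_sin_arcsin_div hr hd hdr, sqrt_sq_sub_sq_eq_mul_cos_arcsin d hr]
      _ = _ := by rw [sin_two_mul]; ring

theorem stmt_5_general (A d r : ℝ) (hd : 0 < d) (hdr : d ≤ r)
    (harea : r ^ 2 * Real.arcsin (d / r) - d * Real.sqrt (r ^ 2 - d ^ 2) = A) :
    2 * r * Real.arcsin (d / r) ≥ Real.sqrt (2 * A * Real.pi) := by
  have hr : 0 < r := hd.trans_le hdr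
  set t := arcsin (d / r)
  have ht₀ : 0 ≤ t := arcsin_nonneg.2 (div_pos hd hr).le
  have ht : t ≤ π / 2 := arcsin_le_pi_div_two _
  have hsq : 2 * A * π ≤ (2 * r * t) ^ 2 := by
    rw [← harea, sq_mul_arcsin_sub_mul_sqrt_eq hr (by linarith) hdr]
    linear_combination pi_mul_sq_mul_sub_sin_le_sq r (θ := 2 * t) (by linarith) (by linarith)
  exact (sqrt_le_left (by positivity)).2 hsq

/-- **Lemma 2.6** (inequality part). A circular segment cut off by a chord of length `2d`
from a circle of radius `r` (with `0 < d ≤ r`) having area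
`r²·arcsin(d/r) − d·√(r² − d²) = A` has arc length `2r·arcsin(d/r)` at least `√(2Aπ)`. -/
theorem stmt_5 (A d r : ℝ) (hA : 0 < A) (hd : 0 < d) (hdr : d ≤ r)
    (harea : r ^ 2 * Real.arcsin (d / r) - d * Real.sqrt (r ^ 2 - d ^ 2) = A) :
    2 * r * Real.arcsin (d / r) ≥ Real.sqrt (2 * A * Real.pi) :=
  stmt_5_general A d r hd hdr harea
end

section
/- Let A > 0 and let d, r be real numbers with 0 < d ≤ r satisfying r²·arcsin(d/r) − d·√(r² − d²) = A. Then equality 2r·arcsin(d/r) = √(2·A·π) holds if and only if r = d = √(2A/π). -/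
/-!
Put `θ = arcsin (d / r)`. The segment has area `A = r² (2θ - sin 2θ) / 2` and arc length
`L = 2rθ`, so `L² - 2πA = r² ((2θ)² - π (2θ - sin 2θ))`. The parabola bound
`x (π - x) / π < sin x` on `(0, π)` makes this positive unless `2θ = π`, i.e. `d = r`,
and for the half-disc `A = π r² / 2` and `L = π r`.
-/

open Real

/-- The circular segment cut off from a circle of radius `r` by a chord of length `2 * d`. -/
noncomputable def circularSegmentArea (r d : ℝ) : ℝ :=
  r ^ 2 * arcsin (d / r) - d * √(r ^ 2 - d ^ 2)

noncomputable def circularSegmentArcLength (r d : ℝ) : ℝ :=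
  2 * r * arcsin (d / r)

theorem mul_pi_sub_div_pi_lt_sin {x : ℝ} (hx₀ : 0 < x) (hxπ : x < π) :
    x * (π - x) / π < sin x := by
  wlog hx : x ≤ π / 2 generalizing x
  · have := this (sub_pos.2 hxπ) (by linarith) (by linarith)
    rwa [sin_pi_sub, sub_sub_cancel, mul_comm] at this
  rw [div_lt_iff₀ pi_pos]
  rcases le_or_gt x 1 with hx1 | hx1
  · -- `sin x > x - x³/6 ≥ x - x²/π` because `π x < 6`
    have hcube := mul_lt_mul_of_pos_left (sin_gt_sub_cube hx₀) pi_pos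
    have hsix : 0 ≤ x ^ 2 * (6 - π * x) := mul_nonneg (sq_nonneg x) (by nlinarith [pi_lt_four])
    nlinarith
  · -- `sin x = cos (π/2 - x) ≥ 1 - (π/2 - x)²/2`, and `π/2 - x < 0.6`
    have hcos := one_sub_sq_div_two_le_cos (x := π / 2 - x)
    rw [cos_pi_div_two_sub] at hcos
    nlinarith [pi_gt_d2, pi_lt_d2, sq_nonneg (π / 2 - x)]

theorem circularSegmentArea_eq {r d : ℝ} (hr : 0 < r) (hdr : |d| ≤ r) :
    circularSegmentArea r d =
      r ^ 2 / 2 * (2 * arcsin (d / r) - sin (2 * arcsin (d / r))) := by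
  obtain ⟨hneg, hpos⟩ := abs_le.1 hdr
  have hsin : sin (arcsin (d / r)) = d / r :=
    sin_arcsin ((le_div_iff₀ hr).2 (by linarith)) ((div_le_iff₀ hr).2 (by linarith))
  have hcos : cos (arcsin (d / r)) = √(r ^ 2 - d ^ 2) / r := by
    rw [cos_arcsin, div_pow, one_sub_div (by positivity), sqrt_div' _ (sq_nonneg r), sqrt_sq hr.le]
  rw [circularSegmentArea, sin_two_mul, hsin, hcos]
  field_simp

theorem circularSegmentArea_self {r : ℝ} (hr : r ≠ 0) :
    circularSegmentArea r r = π * r ^ 2 / 2 := by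
  rw [circularSegmentArea, div_self hr, arcsin_one, sub_self, sqrt_zero, mul_zero, sub_zero]
  ring

theorem circularSegmentArcLength_self {r : ℝ} (hr : r ≠ 0) :
    circularSegmentArcLength r r = π * r := by
  rw [circularSegmentArcLength, div_self hr, arcsin_one]
  ring

theorem two_mul_circularSegmentArea_mul_pi_lt_sq {r d : ℝ} (hd : 0 < d) (hdr : d < r) :
    2 * circularSegmentArea r d * π < circularSegmentArcLength r d ^ 2 := by
  have hr : 0 < r := hd.trans hdr
  set θ := arcsin (d / r)
  have hθ₀ : 0 < θ := arcsin_pos.2 (div_pos hd hr)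
  have hθ : θ < π / 2 := arcsin_lt_pi_div_two.2 ((div_lt_one hr).2 hdr)
  have hbound := mul_pi_sub_div_pi_lt_sin (x := 2 * θ) (by linarith) (by linarith)
  rw [div_lt_iff₀ pi_pos] at hbound
  rw [circularSegmentArea_eq hr (by rw [abs_of_pos hd]; exact hdr.le), circularSegmentArcLength]
  nlinarith [pow_pos hr 2]

theorem stmt_6_general (A d r : ℝ) (hd : 0 < d) (hdr : d ≤ r)
    (harea : r ^ 2 * Real.arcsin (d / r) - d * Real.sqrt (r ^ 2 - d ^ 2) = A) :
    2 * r * Real.arcsin (d / r) = Real.sqrt (2 * A * Real.pi) ↔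
      r = Real.sqrt (2 * A / Real.pi) ∧ d = Real.sqrt (2 * A / Real.pi) := by
  change circularSegmentArea r d = A at harea
  change circularSegmentArcLength r d = _ ↔ _
  obtain rfl | hlt := hdr.eq_or_lt
  · rw [circularSegmentArea_self hd.ne'] at harea
    subst harea
    have hL : circularSegmentArcLength d d = √(2 * (π * d ^ 2 / 2) * π) := by
      rw [circularSegmentArcLength_self hd.ne', show 2 * (π * d ^ 2 / 2) * π = (π * d) ^ 2 by ring,
        sqrt_sq (by positivity)]
    have hd' : d = √(2 * (π * d ^ 2 / 2) / π) := by
      rw [show 2 * (π * d ^ 2 / 2) / π = d ^ 2 by field_simp, sqrt_sq hd.le]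
    exact ⟨fun _ => ⟨hd', hd'⟩, fun _ => hL⟩
  · have hL : 0 < circularSegmentArcLength r d :=
      mul_pos (by linarith) (arcsin_pos.2 (div_pos hd (hd.trans hlt)))
    have hsqrt_lt := (sqrt_lt' hL).2 (two_mul_circularSegmentArea_mul_pi_lt_sq hd hlt)
    rw [harea] at hsqrt_lt
    exact ⟨fun h => absurd h hsqrt_lt.ne', fun ⟨hr, hd'⟩ => absurd (hr.trans hd'.symm) hlt.ne'⟩

/-- **Lemma 2.6** (equality case). With the notation of the circular-segment lemma,
the arc length `2r·arcsin(d/r)` equals `√(2Aπ)` if and only if `r = d = √(2A/π)`,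
i.e. the chord is a diameter. -/
theorem stmt_6 (A d r : ℝ) (hA : 0 < A) (hd : 0 < d) (hdr : d ≤ r)
    (harea : r ^ 2 * Real.arcsin (d / r) - d * Real.sqrt (r ^ 2 - d ^ 2) = A) :
    2 * r * Real.arcsin (d / r) = Real.sqrt (2 * A * Real.pi) ↔
      r = Real.sqrt (2 * A / Real.pi) ∧ d = Real.sqrt (2 * A / Real.pi) :=
  stmt_6_general A d r hd hdr harea
end

section
/- Let n ≥ 1 and let p : Fin (n+1) → EuclideanSpace ℝ (Fin n) be points with dist(p i, p j) = ρ for all i ≠ j, where ρ > 0 (a regular n-dimensional simplex with edge length ρ). Then for every point M in the convex hull of {p 0, …, p n}, the sum over i of the distances from M to the affine span of the points {p j : j ≠ i} (the facet opposite the vertex p i) equals √((n+1)/(2n))·ρ. -/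
open Finset Metric RealInnerProductSpace

set_option maxHeartbeats 1000000 in
/-- **Lemma 2.7.** For a regular simplex in `ℝⁿ` with vertices `p 0, …, p n` at pairwise
distance `ρ > 0`, the sum of the distances from any point `M` of the simplex to the
hyperplanes through its facets equals `√((n+1)/(2n)) · ρ`. -/
theorem stmt_7 (n : ℕ) (hn : 1 ≤ n) (ρ : ℝ) (hρ : 0 < ρ)
    (p : Fin (n + 1) → EuclideanSpace ℝ (Fin n))
    (hp : ∀ i j, i ≠ j → dist (p i) (p j) = ρ)
    (M : EuclideanSpace ℝ (Fin n)) (hM : M ∈ convexHull ℝ (Set.range p)) :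
    ∑ i : Fin (n + 1),
        Metric.infDist M (affineSpan ℝ (p '' {j | j ≠ i}) : Set (EuclideanSpace ℝ (Fin n))) =
      Real.sqrt ((n + 1) / (2 * n)) * ρ := by
  classical
  have hnpos : (0:ℝ) < n := by exact_mod_cast hn
  have hn0 : (n : ℝ) ≠ 0 := ne_of_gt hnpos
  -- weights
  rw [convexHull_range_eq_exists_affineCombination] at hM
  obtain ⟨t, w, hw0, hw1, hMw⟩ := hM
  set W : Fin (n + 1) → ℝ := fun j => if j ∈ t then w j else 0 with hWdef
  have hW0 : ∀ j, 0 ≤ W j := by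
    intro j; by_cases h : j ∈ t <;> simp [hWdef, h, hw0 j]
  have hW1 : ∑ j, W j = 1 := by
    rw [← hw1]; simp [hWdef, Finset.sum_ite_mem]
  have hMsum : M = ∑ j, W j • p j := by
    rw [← hMw, Finset.affineCombination_eq_linear_combination t p w hw1]
    simp only [hWdef, ite_smul, zero_smul, Finset.sum_ite_mem, Finset.univ_inter]
  set h : ℝ := Real.sqrt ((n + 1) / (2 * n)) * ρ with hhdef
  have key : ∀ i, Metric.infDist M
      (affineSpan ℝ (p '' {j | j ≠ i}) : Set (EuclideanSpace ℝ (Fin n))) = W i * h := by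
    intro i
    set S : AffineSubspace ℝ (EuclideanSpace ℝ (Fin n)) := affineSpan ℝ (p '' {j | j ≠ i})
      with hSdef
    have hrange : p '' {j | j ≠ i} = Set.range (fun j : {j : Fin (n+1) // j ≠ i} => p j) := by
      ext x
      simp [Set.mem_image, Set.mem_range, Subtype.exists]
    have hcardty : Fintype.card {j : Fin (n+1) // j ≠ i} = n := by
      simp [Fintype.card_subtype_compl]
    have hcard : (Finset.univ : Finset {j : Fin (n+1) // j ≠ i}).card = n := by
      rw [Finset.card_univ, hcardty]
    -- edge vectors
    set v : {j : Fin (n+1) // j ≠ i} → EuclideanSpace ℝ (Fin n) := fun j => p j - p i with hvdef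
    have hnorm_sub : ∀ (a b : Fin (n+1)), a ≠ b → ‖p a - p b‖ = ρ := by
      intro a b hab; rw [← dist_eq_norm]; exact hp a b hab
    have hv : ∀ j k : {j : Fin (n+1) // j ≠ i}, ⟪v j, v k⟫ = if j = k then ρ^2 else ρ^2/2 := by
      intro j k
      by_cases hjk : j = k
      · subst hjk
        rw [if_pos rfl, real_inner_self_eq_norm_sq, hnorm_sub _ _ j.2]
      · rw [if_neg hjk]
        have h1 : ‖v j - v k‖ = ρ := by
          rw [show v j - v k = p ↑j - p ↑k by simp only [hvdef]; abel]
          exact hnorm_sub _ _ (fun hh => hjk (Subtype.ext hh))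
        have h2 := norm_sub_sq_real (v j) (v k)
        rw [h1, hnorm_sub _ _ j.2, hnorm_sub _ _ k.2] at h2
        linarith
    -- centroid of the facet
    set g : EuclideanSpace ℝ (Fin n) :=
      Finset.univ.centroid ℝ (fun j : {j : Fin (n+1) // j ≠ i} => p j) with hgdef
    have hgS : g ∈ S := by
      rw [hSdef, hrange]
      exact centroid_mem_affineSpan_of_card_ne_zero ℝ (s := Finset.univ) _ (by rw [hcard]; omega)
    have hcw1 : ∑ _j : {j : Fin (n+1) // j ≠ i}, (n:ℝ)⁻¹ = 1 := by
      rw [Finset.sum_const, hcard, nsmul_eq_mul, mul_inv_cancel₀ hn0]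
    have hcw2 : ∑ j ∈ (Finset.univ : Finset {j : Fin (n+1) // j ≠ i}),
        Finset.univ.centroidWeights ℝ j = 1 := by
      simp only [Finset.centroidWeights_apply, Finset.sum_const, hcard, nsmul_eq_mul]
      rw [mul_inv_cancel₀ hn0]
    have hgsum : g = ∑ j : {j : Fin (n+1) // j ≠ i}, (n:ℝ)⁻¹ • p ↑j := by
      rw [hgdef, Finset.centroid_def, Finset.affineCombination_eq_linear_combination _ _ _ hcw2]
      refine Finset.sum_congr rfl fun j _ => ?_
      rw [Finset.centroidWeights_apply, hcard]
    have hg : g - p i = (n:ℝ)⁻¹ • ∑ j, v j := by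
      rw [hgsum, Finset.smul_sum]
      simp only [hvdef, smul_sub, Finset.sum_sub_distrib, ← Finset.sum_smul, hcw1, one_smul]
    have hsum : ∀ k, ∑ j, ⟪v j, v k⟫ = ((n:ℝ)+1) * ρ^2 / 2 := by
      intro k
      have hrw : ∀ j, ⟪v j, v k⟫ = ρ^2/2 + (if j = k then ρ^2/2 else 0) := by
        intro j; rw [hv]; by_cases hjk : j = k <;> simp [hjk]
      simp only [hrw, Finset.sum_add_distrib, Finset.sum_const, Finset.sum_ite_eq',
        Finset.mem_univ, if_pos, hcard, nsmul_eq_mul]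
      ring
    have hdv : ∀ k, ⟪g - p i, v k⟫ = ((n:ℝ)+1) * ρ^2 / (2*n) := by
      intro k
      rw [hg, real_inner_smul_left, sum_inner, hsum k]
      field_simp
    have hdd : ⟪g - p i, g - p i⟫ = ((n:ℝ)+1) * ρ^2 / (2*n) := by
      have step : ⟪g - p i, g - p i⟫ = (n:ℝ)⁻¹ * ∑ k, ⟪g - p i, v k⟫ := by
        conv_lhs => rw [show (g - p i : EuclideanSpace ℝ (Fin n)) = (n:ℝ)⁻¹ • ∑ j, v j from hg]
        rw [real_inner_smul_left, sum_inner]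
        congr 1
        refine Finset.sum_congr rfl fun k _ => ?_
        rw [← hg]
        exact real_inner_comm _ _
      rw [step]
      simp only [hdv]
      rw [Finset.sum_const, hcard, nsmul_eq_mul]
      field_simp
    have hu2 : ‖p i - g‖^2 = ((n:ℝ)+1) * ρ^2 / (2*n) := by
      rw [← real_inner_self_eq_norm_sq, show (p i - g : EuclideanSpace ℝ (Fin n)) = -(g - p i)
        by abel, inner_neg_neg, hdd]
    have hupos : 0 < ‖p i - g‖ := by
      have h2 : 0 < ‖p i - g‖^2 := by rw [hu2]; positivity
      nlinarith [norm_nonneg (p i - g)]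
    have horth : ∀ k : {j : Fin (n+1) // j ≠ i}, ⟪p i - g, p ↑k - g⟫ = 0 := by
      intro k
      rw [show (p ↑k - g : EuclideanSpace ℝ (Fin n)) = v k - (g - p i) by simp only [hvdef]; abel,
        show (p i - g : EuclideanSpace ℝ (Fin n)) = -(g - p i) by abel,
        inner_neg_left, inner_sub_right, hdv k, hdd]
      ring
    have horthS : ∀ y ∈ (S : Set (EuclideanSpace ℝ (Fin n))), ⟪p i - g, y - g⟫ = 0 := by
      intro y hy
      have hdir : y - g ∈ vectorSpan ℝ (p '' {j | j ≠ i}) := by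
        have h1 := AffineSubspace.vsub_mem_direction hy hgS
        rwa [hSdef, direction_affineSpan, vsub_eq_sub] at h1
      have hle : vectorSpan ℝ (p '' {j | j ≠ i}) ≤ (ℝ ∙ (p i - g))ᗮ := by
        rw [vectorSpan_def, Submodule.span_le]
        rintro x ⟨a, ⟨ja, hja, rfl⟩, b, ⟨jb, hjb, rfl⟩, rfl⟩
        rw [SetLike.mem_coe, Submodule.mem_orthogonal_singleton_iff_inner_right]
        have hx : (p ja -ᵥ p jb : EuclideanSpace ℝ (Fin n)) = (p ja - g) - (p jb - g) := by
          rw [vsub_eq_sub]; abel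
        show ⟪p i - g, p ja -ᵥ p jb⟫ = 0
        rw [hx, inner_sub_right, horth ⟨ja, hja⟩, horth ⟨jb, hjb⟩, sub_zero]
      exact Submodule.mem_orthogonal_singleton_iff_inner_right.mp (hle hdir)
    have hMsub : M - g = ∑ j, W j • (p j - g) := by
      conv_lhs => rw [hMsum]
      simp only [smul_sub, Finset.sum_sub_distrib, ← Finset.sum_smul, hW1, one_smul]
    have hinnerMg : ⟪p i - g, M - g⟫ = W i * ‖p i - g‖^2 := by
      rw [hMsub, inner_sum, Finset.sum_eq_single i]
      · rw [real_inner_smul_right, real_inner_self_eq_norm_sq]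
      · intro j _ hj
        rw [real_inner_smul_right, horth ⟨j, hj⟩, mul_zero]
      · simp
    have hlow : ∀ y ∈ (S : Set (EuclideanSpace ℝ (Fin n))), W i * ‖p i - g‖ ≤ dist M y := by
      intro y hy
      have h1 : ⟪p i - g, M - y⟫ = W i * ‖p i - g‖^2 := by
        rw [show (M - y : EuclideanSpace ℝ (Fin n)) = (M - g) - (y - g) by abel,
          inner_sub_right, hinnerMg, horthS y hy, sub_zero]
      have h2 := real_inner_le_norm (p i - g) (M - y)
      rw [h1] at h2
      rw [dist_eq_norm]
      have h3 : W i * ‖p i - g‖ * ‖p i - g‖ ≤ ‖M - y‖ * ‖p i - g‖ := by nlinarith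
      exact le_of_mul_le_mul_right h3 hupos
    -- the projection point
    set q : Fin (n+1) → EuclideanSpace ℝ (Fin n) := fun j => if j = i then g else p j with hqdef
    have hq_mem : ∀ j, q j ∈ S := by
      intro j; by_cases hj : j = i
      · simpa [hqdef, hj] using hgS
      · simp only [hqdef, if_neg hj]
        exact subset_affineSpan ℝ _ ⟨j, hj, rfl⟩
    have hyS : M - W i • (p i - g) ∈ S := by
      have hcomb : Finset.univ.affineCombination ℝ q W = M - W i • (p i - g) := by
        rw [Finset.affineCombination_eq_linear_combination _ _ _ hW1]
        conv_rhs => rw [hMsum]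
        rw [← Finset.add_sum_erase _ (fun j => W j • q j) (Finset.mem_univ i),
          ← Finset.add_sum_erase _ (fun j => W j • p j) (Finset.mem_univ i)]
        have hco : ∀ j ∈ Finset.univ.erase i, W j • q j = W j • p j := by
          intro j hj
          rw [hqdef]
          simp only [if_neg (Finset.ne_of_mem_erase hj)]
        rw [Finset.sum_congr rfl hco]
        simp only [hqdef, if_pos rfl, smul_sub]
        abel
      have hsub : affineSpan ℝ (Set.range q) ≤ S := by
        rw [affineSpan_le]
        rintro x ⟨j, rfl⟩; exact hq_mem j
      exact hsub (hcomb ▸ affineCombination_mem_affineSpan hW1 q)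
    have hup : Metric.infDist M (S : Set (EuclideanSpace ℝ (Fin n))) ≤ W i * ‖p i - g‖ := by
      have h1 := Metric.infDist_le_dist_of_mem (x := M) hyS
      rwa [dist_eq_norm, show (M - (M - W i • (p i - g)) : EuclideanSpace ℝ (Fin n))
        = W i • (p i - g) by abel, norm_smul, Real.norm_of_nonneg (hW0 i)] at h1
    have hlow' : W i * ‖p i - g‖ ≤ Metric.infDist M (S : Set (EuclideanSpace ℝ (Fin n))) := by
      have hne : (S : Set (EuclideanSpace ℝ (Fin n))).Nonempty := ⟨g, hgS⟩
      haveI : Nonempty (S : Set (EuclideanSpace ℝ (Fin n))) := hne.to_subtype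
      rw [Metric.infDist_eq_iInf]
      exact le_ciInf fun y => hlow y y.2
    have hnormu : ‖p i - g‖ = h := by
      have h2 : ‖p i - g‖^2 = (((n:ℝ)+1)/(2*n)) * ρ^2 := by rw [hu2]; ring
      rw [hhdef, ← Real.sqrt_sq (norm_nonneg (p i - g : EuclideanSpace ℝ (Fin n))), h2,
        Real.sqrt_mul (by positivity), Real.sqrt_sq hρ.le]
    rw [← hnormu]
    exact le_antisymm hup hlow'
  simp only [key, ← Finset.sum_mul, hW1, one_mul]
end
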